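/- For any earlier time t' < t, suppose Var(τ̂_t^{TE}) > Cov(τ̂_t^{TE}, τ̂_{t'}^{TE}). Then there exists α ∈ (0,1) such that τ̂_t^c = α τ̂_t^{TE} + (1 − α) τ̂_{t'}^{TE} has mean squared error for τ_t^{TE} strictly lower than Var(τ̂_t^{TE}). Moreover, if in addition Var(τ̂_t^{TE}) − Var(τ̂_{t'}^{TE}) > 4(t − t')²ε², then α = 1/2 yields MSE(τ̂_t^c) < Var(τ̂_t^{TE}). -/

import Mathlib

open MeasureTheory ProbabilityTheory Filter
open scoped ProbabilityTheory

/-- Horvitz–Thompson estimator of the total effect, based on the exposures `h1 i`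
(everybody treated) and `h0 i` (everybody in control). -/
noncomputable def htTE {Ω Δ : Type*} [MeasureSpace Ω] [DecidableEq Δ] {n : ℕ}
    (H : Fin n → Ω → Δ) (Y : Fin n → Δ → ℝ) (h1 h0 : Fin n → Δ) (ω : Ω) : ℝ :=
  (n : ℝ)⁻¹ * ∑ i : Fin n,
    ((if H i ω = h1 i then Y i (h1 i) / (ℙ {ω' | H i ω' = h1 i}).toReal else 0)
      - (if H i ω = h0 i then Y i (h0 i) / (ℙ {ω' | H i ω' = h0 i}).toReal else 0))

/-- The total effect `τ_t^{TE}`. -/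
noncomputable def totalEffect {Δ : Type*} {n : ℕ}
    (Y : Fin n → Δ → ℝ) (h1 h0 : Fin n → Δ) : ℝ :=
  (n : ℝ)⁻¹ * ∑ i : Fin n, (Y i (h1 i) - Y i (h0 i))

/-- Covariance of two real random variables. -/
noncomputable def cov {Ω : Type*} [MeasureSpace Ω] (X Z : Ω → ℝ) : ℝ :=
  ∫ ω, (X ω - ∫ x, X x) * (Z ω - ∫ x, Z x)

/-!
Write `X = τ̂_t`, `Z = τ̂_{t'}`; unbiasedness gives `E X = τ_t`. The mean squared error
of `αX + (1 - α)Z` for `E X` is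
`α² Var X + (1 - α)² Var Z + 2α(1 - α) Cov(X, Z) + (1 - α)² (E Z - E X)²`.
With `δ = 1 - α` this is `Var X - 2δ (Var X - Cov(X, Z)) + O(δ²)`, which is below `Var X` for
small `δ > 0`. At `α = 1/2` it is below `Var X` as soon as `Var Z + (E Z - E X)² < Var X`, and
weak stability bounds the bias `|E Z - E X| = |τ_{t'} - τ_t|` by `2(t - t')ε`.
-/

lemma exists_mem_Ioo_sq_mul_lt (A : ℝ) {D : ℝ} (hD : 0 < D) :
    ∃ δ ∈ Set.Ioo (0 : ℝ) 1, δ ^ 2 * A < δ * D := by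
  have hden : 0 < |A| + 2 * D := by positivity
  refine ⟨D / (|A| + 2 * D), ⟨by positivity, (div_lt_one hden).2 (by linarith [abs_nonneg A])⟩, ?_⟩
  set δ := D / (|A| + 2 * D)
  have hδ : 0 < δ := by positivity
  have hδA : δ * |A| < D := by
    rw [div_mul_eq_mul_div, div_lt_iff₀ hden]; nlinarith
  calc δ ^ 2 * A ≤ δ * (δ * |A|) := by
        rw [← mul_assoc, ← sq]; exact mul_le_mul_of_nonneg_left (le_abs_self A) (by positivity)
    _ < δ * D := mul_lt_mul_of_pos_left hδA hδ

section

variable {Ω : Type*} {mΩ : MeasurableSpace Ω} {μ : Measure Ω} [IsProbabilityMeasure μ]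
  {X Z : Ω → ℝ}

lemma integral_sq_sub_eq_variance_add (hX : MemLp X 2 μ) (c : ℝ) :
    ∫ ω, (X ω - c) ^ 2 ∂μ = Var[X; μ] + (μ[X] - c) ^ 2 := by
  have hXc : MemLp (fun ω => X ω - c) 2 μ := hX.sub (memLp_const c)
  rw [← variance_sub_const hX.aestronglyMeasurable c, variance_eq_sub hXc,
    integral_sub (hX.integrable one_le_two) (integrable_const c)]
  simp

lemma variance_const_mul_add_const_mul (hX : MemLp X 2 μ) (hZ : MemLp Z 2 μ) (a b : ℝ) :
    Var[fun ω => a * X ω + b * Z ω; μ]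
      = a ^ 2 * Var[X; μ] + b ^ 2 * Var[Z; μ] + 2 * a * b * cov[X, Z; μ] := by
  rw [variance_fun_add (hX.const_mul a) (hZ.const_mul b), variance_const_mul, variance_const_mul,
    covariance_const_mul_left, covariance_const_mul_right]
  ring

lemma integral_sq_const_mul_add_const_mul_sub (hX : MemLp X 2 μ) (hZ : MemLp Z 2 μ)
    (a b c : ℝ) :
    ∫ ω, (a * X ω + b * Z ω - c) ^ 2 ∂μ
      = a ^ 2 * Var[X; μ] + b ^ 2 * Var[Z; μ] + 2 * a * b * cov[X, Z; μ]
        + (a * μ[X] + b * μ[Z] - c) ^ 2 := by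
  have hW : MemLp (fun ω => a * X ω + b * Z ω) 2 μ := (hX.const_mul a).add (hZ.const_mul b)
  rw [integral_sq_sub_eq_variance_add hW c,
    variance_const_mul_add_const_mul hX hZ,
    integral_add ((hX.const_mul a).integrable one_le_two) ((hZ.const_mul b).integrable one_le_two),
    integral_const_mul, integral_const_mul]

lemma exists_integral_sq_convex_combination_sub_lt_variance (hX : MemLp X 2 μ)
    (hZ : MemLp Z 2 μ) (hcov : cov[X, Z; μ] < Var[X; μ]) :
    ∃ α ∈ Set.Ioo (0 : ℝ) 1, ∫ ω, (α * X ω + (1 - α) * Z ω - μ[X]) ^ 2 ∂μ < Var[X; μ] := by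
  obtain ⟨δ, ⟨hδ0, hδ1⟩, hδ⟩ := exists_mem_Ioo_sq_mul_lt
    (Var[X; μ] + Var[Z; μ] - 2 * cov[X, Z; μ] + (μ[Z] - μ[X]) ^ 2)
    (D := 2 * (Var[X; μ] - cov[X, Z; μ])) (by linarith)
  refine ⟨1 - δ, ⟨by linarith, by linarith⟩, ?_⟩
  rw [integral_sq_const_mul_add_const_mul_sub hX hZ]
  linear_combination hδ

lemma integral_sq_half_add_half_sub_lt_variance (hX : MemLp X 2 μ) (hZ : MemLp Z 2 μ)
    (hcov : cov[X, Z; μ] < Var[X; μ]) (hZX : Var[Z; μ] + (μ[Z] - μ[X]) ^ 2 < Var[X; μ]) :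
    ∫ ω, (1 / 2 * X ω + 1 / 2 * Z ω - μ[X]) ^ 2 ∂μ < Var[X; μ] := by
  rw [integral_sq_const_mul_add_const_mul_sub hX hZ]
  linear_combination (hZX + 2 * hcov) / 4

end

lemma abs_sub_le_mul_of_abs_sub_succ_le {f : ℕ → ℝ} {T : ℕ} {ε : ℝ}
    (hf : ∀ k, k + 1 < T → |f k - f (k + 1)| ≤ ε) {s t : ℕ} (hst : s ≤ t) (htT : t < T) :
    |f s - f t| ≤ ((t : ℝ) - s) * ε := by
  have h := dist_le_Ico_sum_of_dist_le (f := f) (d := fun _ => ε) hst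
    fun _ hk => by rw [Real.dist_eq]; exact hf _ (by omega)
  rwa [Real.dist_eq, Finset.sum_const, Nat.card_Ico, nsmul_eq_mul, Nat.cast_sub hst] at h

lemma abs_totalEffect_sub_le {Δ : Type*} {n : ℕ} {Y Y' : Fin n → Δ → ℝ} {h1 h0 : Fin n → Δ}
    {δ : ℝ} (hδ : 0 ≤ δ) (hY : ∀ i a, |Y i a - Y' i a| ≤ δ) :
    |totalEffect Y h1 h0 - totalEffect Y' h1 h0| ≤ 2 * δ := by
  have hterm : ∀ i, |(Y i (h1 i) - Y i (h0 i)) - (Y' i (h1 i) - Y' i (h0 i))| ≤ 2 * δ := fun i =>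
    calc _ = |(Y i (h1 i) - Y' i (h1 i)) - (Y i (h0 i) - Y' i (h0 i))| := by ring_nf
      _ ≤ |Y i (h1 i) - Y' i (h1 i)| + |Y i (h0 i) - Y' i (h0 i)| := abs_sub _ _
      _ ≤ 2 * δ := by linarith [hY i (h1 i), hY i (h0 i)]
  rcases Nat.eq_zero_or_pos n with rfl | hn
  · simp [totalEffect]; positivity
  calc |totalEffect Y h1 h0 - totalEffect Y' h1 h0|
      = (n : ℝ)⁻¹ * |∑ i, ((Y i (h1 i) - Y i (h0 i)) - (Y' i (h1 i) - Y' i (h0 i)))| := by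
        rw [totalEffect, totalEffect, ← mul_sub, ← Finset.sum_sub_distrib, abs_mul,
          abs_of_pos (by positivity)]
    _ ≤ (n : ℝ)⁻¹ * (n * (2 * δ)) := by
        gcongr
        refine (Finset.abs_sum_le_sum_abs _ _).trans ?_
        simpa using Finset.sum_le_sum fun i (_ : i ∈ Finset.univ) => hterm i
    _ = 2 * δ := by field_simp

lemma memLp_htTE {Ω Δ : Type*} [MeasureSpace Ω] [IsFiniteMeasure (ℙ : Measure Ω)]
    [DecidableEq Δ] [MeasurableSpace Δ] [MeasurableSingletonClass Δ] {n : ℕ}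
    {H : Fin n → Ω → Δ} (hH : ∀ i, Measurable (H i)) (Y : Fin n → Δ → ℝ) (h1 h0 : Fin n → Δ)
    (p : ENNReal) : MemLp (htTE H Y h1 h0) p ℙ := by
  have hind : ∀ i (a : Δ) (c : ℝ), MemLp (fun ω => if H i ω = a then c else 0) p ℙ :=
    fun i a c => by
      convert memLp_indicator_const (μ := ℙ) p (hH i (measurableSet_singleton a)) c
        (Or.inr (measure_ne_top _ _)) using 1
      ext ω
      by_cases h : H i ω = a <;> simp [h]
  exact (memLp_finsetSum _ fun i _ => (hind i _ _).sub (hind i _ _)).const_mul _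

theorem stmt14_general {Ω Δ : Type*} [MeasureSpace Ω] [IsProbabilityMeasure (ℙ : Measure Ω)]
    [DecidableEq Δ] [MeasurableSpace Δ] [MeasurableSingletonClass Δ]
    {n T : ℕ}
    (H : ℕ → Fin n → Ω → Δ) (hmeas : ∀ (t : ℕ) (i : Fin n), Measurable (H t i))
    (Y : ℕ → Fin n → Δ → ℝ) (h1 h0 : Fin n → Δ)
    -- ε-weak stability of the potential outcomes
    (ε : ℝ)
    (hstab : ∀ t : ℕ, t + 1 < T → ∀ (i : Fin n) (a : Δ), |Y t i a - Y (t + 1) i a| ≤ ε)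
    -- the Horvitz–Thompson estimators are unbiased
    (hunbiased : ∀ t : ℕ, t < T →
      ∫ ω, htTE (H t) (Y t) h1 h0 ω = totalEffect (Y t) h1 h0)
    (t t' : ℕ) (htt' : t' < t) (htT : t < T)
    -- Var(τ̂_t) > Cov(τ̂_t, τ̂_{t'})
    (hVC : cov (htTE (H t) (Y t) h1 h0) (htTE (H t') (Y t') h1 h0)
      < variance (htTE (H t) (Y t) h1 h0) ℙ) :
    -- (a) some convex weight gives mean squared error strictly below Var(τ̂_t)
    (∃ α ∈ Set.Ioo (0 : ℝ) 1,
      ∫ ω, ((α * htTE (H t) (Y t) h1 h0 ω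
              + (1 - α) * htTE (H t') (Y t') h1 h0 ω)
            - totalEffect (Y t) h1 h0) ^ 2
        < variance (htTE (H t) (Y t) h1 h0) ℙ) ∧
    -- (b) under the stronger variance gap, α = 1/2 works
    (4 * ((t : ℝ) - (t' : ℝ)) ^ 2 * ε ^ 2
        < variance (htTE (H t) (Y t) h1 h0) ℙ
          - variance (htTE (H t') (Y t') h1 h0) ℙ →
      ∫ ω, (((1 : ℝ) / 2 * htTE (H t) (Y t) h1 h0 ω
              + (1 : ℝ) / 2 * htTE (H t') (Y t') h1 h0 ω)
            - totalEffect (Y t) h1 h0) ^ 2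
        < variance (htTE (H t) (Y t) h1 h0) ℙ) := by
  have hX := memLp_htTE (hmeas t) (Y t) h1 h0 2
  have hZ := memLp_htTE (hmeas t') (Y t') h1 h0 2
  rw [← hunbiased t htT]
  -- `cov` is definitionally `covariance · · ℙ`
  refine ⟨exists_integral_sq_convex_combination_sub_lt_variance hX hZ hVC, fun hgap =>
    integral_sq_half_add_half_sub_lt_variance hX hZ hVC ?_⟩
  -- for `n = 0` the stability hypothesis is vacuous and `ε` may be negative
  have hY : ∀ i a, |Y t' i a - Y t i a| ≤ ((t : ℝ) - t') * |ε| := fun i a =>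
    abs_sub_le_mul_of_abs_sub_succ_le (f := fun k => Y k i a)
      (fun k hk => (hstab k hk i a).trans (le_abs_self ε)) htt'.le htT
  have hbias := abs_totalEffect_sub_le (h1 := h1) (h0 := h0)
    (mul_nonneg (sub_nonneg.2 (by exact_mod_cast htt'.le)) (abs_nonneg ε)) hY
  rw [hunbiased t' (htt'.trans htT), hunbiased t htT]
  have hbias_sq : (totalEffect (Y t') h1 h0 - totalEffect (Y t) h1 h0) ^ 2
      ≤ 4 * ((t : ℝ) - t') ^ 2 * ε ^ 2 :=
    calc _ ≤ (2 * (((t : ℝ) - t') * |ε|)) ^ 2 := sq_le_sq' (abs_le.1 hbias).1 (abs_le.1 hbias).2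
      _ = _ := by rw [mul_pow, mul_pow, sq_abs]; ring
  linarith

/-- for any earlier time `t' < t`, if `Var(τ̂_t) > Cov(τ̂_t, τ̂_{t'})`
then some convex combination of `τ̂_t` and `τ̂_{t'}` strictly reduces the mean squared
error; if moreover `Var(τ̂_t) − Var(τ̂_{t'}) > 4(t − t')²ε²`, the weight `α = 1/2`
suffices. -/
theorem stmt14 {Ω Δ : Type*} [MeasureSpace Ω] [IsProbabilityMeasure (ℙ : Measure Ω)]
    [Fintype Δ] [DecidableEq Δ] [MeasurableSpace Δ] [MeasurableSingletonClass Δ]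
    {n T : ℕ}
    (H : ℕ → Fin n → Ω → Δ) (hmeas : ∀ (t : ℕ) (i : Fin n), Measurable (H t i))
    (Y : ℕ → Fin n → Δ → ℝ) (h1 h0 : Fin n → Δ)
    -- exposure probabilities are positive
    (hpos : ∀ (t : ℕ), t < T → ∀ i : Fin n,
      0 < (ℙ {ω | H t i ω = h1 i}).toReal ∧ 0 < (ℙ {ω | H t i ω = h0 i}).toReal)
    -- ε-weak stability of the potential outcomes
    (ε : ℝ)
    (hstab : ∀ t : ℕ, t + 1 < T → ∀ (i : Fin n) (a : Δ), |Y t i a - Y (t + 1) i a| ≤ ε)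
    -- the Horvitz–Thompson estimators are unbiased
    (hunbiased : ∀ t : ℕ, t < T →
      ∫ ω, htTE (H t) (Y t) h1 h0 ω = totalEffect (Y t) h1 h0)
    (t t' : ℕ) (htt' : t' < t) (htT : t < T)
    -- Var(τ̂_t) > Cov(τ̂_t, τ̂_{t'})
    (hVC : cov (htTE (H t) (Y t) h1 h0) (htTE (H t') (Y t') h1 h0)
      < variance (htTE (H t) (Y t) h1 h0) ℙ) :
    -- (a) some convex weight gives mean squared error strictly below Var(τ̂_t)
    (∃ α ∈ Set.Ioo (0 : ℝ) 1,
      ∫ ω, ((α * htTE (H t) (Y t) h1 h0 ω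
              + (1 - α) * htTE (H t') (Y t') h1 h0 ω)
            - totalEffect (Y t) h1 h0) ^ 2
        < variance (htTE (H t) (Y t) h1 h0) ℙ) ∧
    -- (b) under the stronger variance gap, α = 1/2 works
    (4 * ((t : ℝ) - (t' : ℝ)) ^ 2 * ε ^ 2
        < variance (htTE (H t) (Y t) h1 h0) ℙ
          - variance (htTE (H t') (Y t') h1 h0) ℙ →
      ∫ ω, (((1 : ℝ) / 2 * htTE (H t) (Y t) h1 h0 ω
              + (1 : ℝ) / 2 * htTE (H t') (Y t') h1 h0 ω)
            - totalEffect (Y t) h1 h0) ^ 2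
        < variance (htTE (H t) (Y t) h1 h0) ℙ) :=
  stmt14_general H hmeas Y h1 h0 ε hstab hunbiased t t' htt' htT hVC
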